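/- arXiv:1701.03062 — 5 statements merged into one kernel-verified Lean document; each statement's English description precedes it below -/
import Mathlib

section
/- In the Monty Hall strategic game, let ν* be the uniform distribution over all six host strategies and μ* be the uniform distribution over the three always-switch contestant strategies (b, fun c => true) for b : Fin 3. Then U(μ*, ν*) = 2/3; moreover U(μ*, τ) = 2/3 for every pure host strategy τ, and U(σ, ν*) ≤ 2/3 for every pure contestant strategy σ. Consequently (μ*, ν*) is a mixed-strategy equilibrium of the game and the minimax value for the contestant is 2/3. -/
open Finset

/-- Doors the host may open: doors distinct from the prize door `a` and the
contestant's door `b`. -/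
def openable (a b : Fin 3) : Finset (Fin 3) := univ.filter (fun c => c ≠ a ∧ c ≠ b)

lemma openable_nonempty (a b : Fin 3) : (openable a b).Nonempty := by revert a b; decide

/-- The door opened by the host, given the contestant's door `b`, the prize door `a`,
and the tie-breaking rule `t` (`false` = lowest possible, `true` = highest possible). -/
def openedDoor (b a : Fin 3) (t : Bool) : Fin 3 :=
  if t then (openable a b).max' (openable_nonempty a b)
  else (openable a b).min' (openable_nonempty a b)

lemma switchable_nonempty (b c : Fin 3) :
    (univ.filter (fun d => d ≠ b ∧ d ≠ c)).Nonempty := by revert b c; decide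

/-- The door the contestant switches to: the (unique) door distinct from her initial
door `b` and the opened door `c`. -/
def switchDoor (b c : Fin 3) : Fin 3 :=
  (univ.filter (fun d => d ≠ b ∧ d ≠ c)).min' (switchable_nonempty b c)

/-- A contestant (reduced) strategy: initial door and a stick/switch rule depending
on the opened door. -/
abbrev ContStrat := Fin 3 × (Fin 3 → Bool)

/-- A host (reduced) strategy: prize door and tie-breaking rule. -/
abbrev HostStrat := Fin 3 × Bool

/-- The contestant's payoff: 1 if her final door conceals the prize, 0 otherwise. -/
def payoff (σ : ContStrat) (τ : HostStrat) : ℝ :=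
  let c := openedDoor σ.1 τ.1 τ.2
  let final := if σ.2 c then switchDoor σ.1 c else σ.1
  if final = τ.1 then 1 else 0

/-- Expected payoff when contestant plays mixed strategy `μ` and host plays `ν`. -/
def expPayoff (μ : ContStrat → ℝ) (ν : HostStrat → ℝ) : ℝ :=
  ∑ σ : ContStrat, ∑ τ : HostStrat, μ σ * ν τ * payoff σ τ

/-- A probability distribution on a finite type. -/
def IsPMF {α : Type*} [Fintype α] (μ : α → ℝ) : Prop :=
  (∀ x, 0 ≤ μ x) ∧ ∑ x, μ x = 1

/-- The uniform distribution over all six host strategies. -/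
noncomputable def νstar : HostStrat → ℝ := fun _ => 1/6

/-- The uniform distribution over the three always-switch contestant strategies. -/
noncomputable def μstar : ContStrat → ℝ :=
  fun σ => if σ.2 = (fun _ => true) then 1/3 else 0

/-- Boolean version of the payoff condition. -/
def payoffB (σ : ContStrat) (τ : HostStrat) : Bool :=
  (if σ.2 (openedDoor σ.1 τ.1 τ.2) then switchDoor σ.1 (openedDoor σ.1 τ.1 τ.2) else σ.1) = τ.1

lemma payoff_eq (σ : ContStrat) (τ : HostStrat) :
    payoff σ τ = if payoffB σ τ then 1 else 0 := by
  simp [payoff, payoffB]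

lemma payoff_nonneg (σ : ContStrat) (τ : HostStrat) : 0 ≤ payoff σ τ := by
  rw [payoff_eq]; split <;> norm_num

lemma sumA (τ : HostStrat) : ∑ σ : ContStrat, μstar σ * payoff σ τ = 2/3 := by
  rw [Fintype.sum_prod_type]
  have h : ∀ b : Fin 3, ∑ f : Fin 3 → Bool, μstar (b, f) * payoff (b, f) τ
      = 1/3 * payoff (b, fun _ => true) τ := by
    intro b
    rw [Finset.sum_eq_single (fun _ => true)]
    · simp [μstar]
    · intro f _ hf; simp [μstar, hf]
    · simp
  simp only [h]
  fin_cases τ <;>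
    simp (config := { decide := true }) [Fin.sum_univ_three, payoff_eq] <;> norm_num

lemma sumB (σ : ContStrat) : ∑ τ : HostStrat, payoff σ τ ≤ 4 := by
  have key : ∀ σ : ContStrat,
      ((univ : Finset HostStrat).filter (fun τ => payoffB σ τ)).card ≤ 4 := by decide
  calc ∑ τ : HostStrat, payoff σ τ
      = (((univ : Finset HostStrat).filter (fun τ => payoffB σ τ)).card : ℝ) := by
        simp [payoff_eq, Finset.sum_boole]
    _ ≤ 4 := by exact_mod_cast key σ

lemma expPayoff_eq_left (μ : ContStrat → ℝ) (ν : HostStrat → ℝ) :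
    expPayoff μ ν = ∑ σ : ContStrat, μ σ * ∑ τ : HostStrat, ν τ * payoff σ τ := by
  unfold expPayoff
  simp only [Finset.mul_sum, mul_assoc]

lemma expPayoff_eq_right (μ : ContStrat → ℝ) (ν : HostStrat → ℝ) :
    expPayoff μ ν = ∑ τ : HostStrat, ν τ * ∑ σ : ContStrat, μ σ * payoff σ τ := by
  unfold expPayoff
  rw [Finset.sum_comm]
  simp only [Finset.mul_sum]
  refine Finset.sum_congr rfl fun τ _ => Finset.sum_congr rfl fun σ _ => by ring

lemma hμstar : IsPMF μstar := by
  constructor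
  · intro x; unfold μstar; split <;> norm_num
  · rw [Fintype.sum_prod_type]
    have h : ∀ b : Fin 3, ∑ f : Fin 3 → Bool, μstar (b, f) = 1/3 := by
      intro b
      rw [Finset.sum_eq_single (fun _ => true)]
      · simp [μstar]
      · intro f _ hf; simp [μstar, hf]
      · simp
    simp only [h]
    norm_num [Fin.sum_univ_three]

lemma hνstar : IsPMF νstar := by
  constructor
  · intro x; norm_num [νstar]
  · simp only [νstar, Finset.sum_const, nsmul_eq_mul]
    norm_num

lemma contestant_bound (σ : ContStrat) :
    ∑ τ : HostStrat, νstar τ * payoff σ τ ≤ 2/3 := by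
  have := sumB σ
  calc ∑ τ : HostStrat, νstar τ * payoff σ τ
      = (1/6) * ∑ τ : HostStrat, payoff σ τ := by
        rw [Finset.mul_sum]; exact Finset.sum_congr rfl fun τ _ => by simp [νstar]
    _ ≤ (1/6) * 4 := by linarith
    _ = 2/3 := by norm_num

lemma expPayoff_μstar (ν : HostStrat → ℝ) (hν : IsPMF ν) :
    expPayoff μstar ν = 2/3 := by
  rw [expPayoff_eq_right]
  simp only [sumA]
  rw [← Finset.sum_mul, hν.2, one_mul]

lemma expPayoff_star : expPayoff μstar νstar = 2/3 := expPayoff_μstar νstar hνstar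

lemma expPayoff_le (μ : ContStrat → ℝ) (hμ : IsPMF μ) : expPayoff μ νstar ≤ 2/3 := by
  rw [expPayoff_eq_left]
  calc ∑ σ : ContStrat, μ σ * ∑ τ : HostStrat, νstar τ * payoff σ τ
      ≤ ∑ σ : ContStrat, μ σ * (2/3) :=
        Finset.sum_le_sum fun σ _ =>
          mul_le_mul_of_nonneg_left (contestant_bound σ) (hμ.1 σ)
    _ = 2/3 := by rw [← Finset.sum_mul, hμ.2, one_mul]

lemma expPayoff_nonneg (μ : ContStrat → ℝ) (hμ : IsPMF μ) (ν : HostStrat → ℝ)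
    (hν : IsPMF ν) : 0 ≤ expPayoff μ ν := by
  unfold expPayoff
  refine Finset.sum_nonneg fun σ _ => Finset.sum_nonneg fun τ _ => ?_
  exact mul_nonneg (mul_nonneg (hμ.1 σ) (hν.1 τ)) (payoff_nonneg σ τ)

set_option maxHeartbeats 1000000 in
theorem montyHall_equilibrium :
    expPayoff μstar νstar = 2/3 ∧
    (∀ τ : HostStrat, ∑ σ : ContStrat, μstar σ * payoff σ τ = 2/3) ∧
    (∀ σ : ContStrat, ∑ τ : HostStrat, νstar τ * payoff σ τ ≤ 2/3) ∧
    -- `(μstar, νstar)` is a mixed-strategy equilibrium: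
    (∀ μ : ContStrat → ℝ, IsPMF μ → expPayoff μ νstar ≤ expPayoff μstar νstar) ∧
    (∀ ν : HostStrat → ℝ, IsPMF ν → expPayoff μstar νstar ≤ expPayoff μstar ν) ∧
    -- the minimax value for the contestant is 2/3:
    (⨆ μ : {μ : ContStrat → ℝ // IsPMF μ}, ⨅ ν : {ν : HostStrat → ℝ // IsPMF ν},
        expPayoff μ.1 ν.1) = 2/3 := by
  have hne1 : Nonempty {μ : ContStrat → ℝ // IsPMF μ} := ⟨⟨μstar, hμstar⟩⟩
  have hne2 : Nonempty {ν : HostStrat → ℝ // IsPMF ν} := ⟨⟨νstar, hνstar⟩⟩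
  refine ⟨expPayoff_star, sumA, contestant_bound, ?_, ?_, ?_⟩
  · intro μ hμ; rw [expPayoff_star]; exact expPayoff_le μ hμ
  · intro ν hν; rw [expPayoff_star, expPayoff_μstar ν hν]
  · have hinf_le : ∀ μ : {μ : ContStrat → ℝ // IsPMF μ},
        (⨅ ν : {ν : HostStrat → ℝ // IsPMF ν}, expPayoff μ.1 ν.1) ≤ 2/3 := by
      intro μ
      have hbdd : BddBelow (Set.range fun ν : {ν : HostStrat → ℝ // IsPMF ν} =>
          expPayoff μ.1 ν.1) := by
        refine ⟨0, ?_⟩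
        rintro x ⟨ν, rfl⟩
        exact expPayoff_nonneg μ.1 μ.2 ν.1 ν.2
      have h1 : (⨅ ν : {ν : HostStrat → ℝ // IsPMF ν}, expPayoff μ.1 ν.1) ≤
          expPayoff μ.1 νstar := ciInf_le hbdd ⟨νstar, hνstar⟩
      exact le_trans h1 (expPayoff_le μ.1 μ.2)
    apply le_antisymm
    · exact ciSup_le hinf_le
    · have hconst : (⨅ ν : {ν : HostStrat → ℝ // IsPMF ν}, expPayoff μstar ν.1) = 2/3 := by
        have : ∀ ν : {ν : HostStrat → ℝ // IsPMF ν}, expPayoff μstar ν.1 = 2/3 :=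
          fun ν => expPayoff_μstar ν.1 ν.2
        simp only [this, ciInf_const]
      have hbdd : BddAbove (Set.range fun μ : {μ : ContStrat → ℝ // IsPMF μ} =>
          ⨅ ν : {ν : HostStrat → ℝ // IsPMF ν}, expPayoff μ.1 ν.1) := by
        refine ⟨2/3, ?_⟩
        rintro x ⟨μ, rfl⟩
        exact hinf_le μ
      calc (2:ℝ)/3 = ⨅ ν : {ν : HostStrat → ℝ // IsPMF ν},
            expPayoff (⟨μstar, hμstar⟩ : {μ : ContStrat → ℝ // IsPMF μ}).1 ν.1 := hconst.symm
        _ ≤ _ := le_ciSup hbdd ⟨μstar, hμstar⟩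
end

section
/- Let x and z be independent and each uniformly distributed on Fin 3 (i.e., consider the uniform probability measure on Fin 3 × Fin 3), and fix b : Fin 3. Then the conditional probability that x = b, given the event that z ≠ x and z ≠ b, equals 1/2. Consequently, when the indifferent host happens to open a door that neither conceals the prize nor was chosen by the contestant, the prize lies behind the contestant's door with probability 1/2 and behind the remaining door with probability 1/2. -/
open MeasureTheory ProbabilityTheory

lemma μunif_final : ((4:ENNReal)/9)⁻¹ * (2/9) = 1/2 := by
  have h1 : ((4:ENNReal)/9)⁻¹ * (2/9) ≠ ⊤ := by
    apply ENNReal.mul_ne_top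
    · rw [ENNReal.inv_ne_top]
      simp [ENNReal.div_eq_zero_iff]
    · exact (ENNReal.div_lt_top (by norm_num) (by norm_num)).ne
  have h2 : (1:ENNReal)/2 ≠ ⊤ := (ENNReal.div_lt_top (by norm_num) (by norm_num)).ne
  rw [← ENNReal.toReal_eq_toReal_iff' h1 h2]
  rw [ENNReal.toReal_mul, ENNReal.toReal_inv, ENNReal.toReal_div, ENNReal.toReal_div,
    ENNReal.toReal_div]
  norm_num

/-- The uniform probability measure on `Fin 3 × Fin 3`; the first coordinate is the
prize door `x`, the second is the door `z` opened by the indifferent host, and they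
are independent, each uniform on the three doors. -/
noncomputable def μunif : Measure (Fin 3 × Fin 3) :=
  (PMF.uniformOfFintype (Fin 3 × Fin 3)).toMeasure

lemma μunif_apply (s : Set (Fin 3 × Fin 3)) [DecidablePred (· ∈ s)] :
    μunif s = (s.toFinset.card : ENNReal) / 9 := by
  classical
  rw [μunif, PMF.toMeasure_apply_fintype]
  simp only [Set.indicator_apply, PMF.uniformOfFintype_apply, ← Finset.sum_filter,
    Finset.sum_const, nsmul_eq_mul]
  have h : Finset.filter (· ∈ s) Finset.univ = s.toFinset := by ext x; simp
  have c : (Fintype.card (Fin 3 × Fin 3) : ENNReal) = 9 := by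
    rw [Fintype.card_prod, Fintype.card_fin]; norm_num
  rw [h, c, ENNReal.div_eq_inv_mul, mul_comm]

lemma μunif_B (b : Fin 3) : μunif {ω : Fin 3 × Fin 3 | ω.2 ≠ ω.1 ∧ ω.2 ≠ b} = 4/9 := by
  rw [μunif_apply]
  have h : ({ω : Fin 3 × Fin 3 | ω.2 ≠ ω.1 ∧ ω.2 ≠ b}.toFinset).card = 4 := by
    revert b; decide
  rw [h]; norm_num

lemma μunif_BA (b : Fin 3) :
    μunif {ω : Fin 3 × Fin 3 | (ω.2 ≠ ω.1 ∧ ω.2 ≠ b) ∧ ω.1 = b} = 2/9 := by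
  rw [μunif_apply]
  have h : ({ω : Fin 3 × Fin 3 | (ω.2 ≠ ω.1 ∧ ω.2 ≠ b) ∧ ω.1 = b}.toFinset).card = 2 := by
    revert b; decide
  rw [h]; norm_num

lemma μunif_BC (b : Fin 3) :
    μunif {ω : Fin 3 × Fin 3 | (ω.2 ≠ ω.1 ∧ ω.2 ≠ b) ∧ (ω.1 ≠ b ∧ ω.1 ≠ ω.2)} = 2/9 := by
  rw [μunif_apply]
  have h : ({ω : Fin 3 × Fin 3 |
      (ω.2 ≠ ω.1 ∧ ω.2 ≠ b) ∧ (ω.1 ≠ b ∧ ω.1 ≠ ω.2)}.toFinset).card = 2 := by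
    revert b; decide
  rw [h]; norm_num

theorem indifferent_host_half (b : Fin 3) :
    μunif[{ω : Fin 3 × Fin 3 | ω.1 = b} | {ω : Fin 3 × Fin 3 | ω.2 ≠ ω.1 ∧ ω.2 ≠ b}]
      = 1/2 ∧
    μunif[{ω : Fin 3 × Fin 3 | ω.1 ≠ b ∧ ω.1 ≠ ω.2} |
        {ω : Fin 3 × Fin 3 | ω.2 ≠ ω.1 ∧ ω.2 ≠ b}] = 1/2 := by
  have hm : MeasurableSet {ω : Fin 3 × Fin 3 | ω.2 ≠ ω.1 ∧ ω.2 ≠ b} := .of_discrete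
  constructor
  · rw [cond_apply hm, ← Set.setOf_and, μunif_B, μunif_BA, μunif_final]
  · rw [cond_apply hm, ← Set.setOf_and, μunif_B, μunif_BC, μunif_final]
end

section
/- In the Sleeping Beauty semantic game, let x and t be independent and uniformly distributed on Bool (x the coin toss, t the day) and let g be independent with P(g = Heads) = p, for p ∈ [0,1]. Then the probability that Eloise wins, i.e., P((x = Heads ∧ t = Tuesday) ∨ g = x), equals (3 − p)/4. In particular, the truth value of the Sleeping Beauty sentence relative to the uniform behavioral strategy of Nature is 3/4, attained at p = 0. -/
def Heads : Bool := true
def Tails : Bool := false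
def Monday : Bool := false
def Tuesday : Bool := true

/-- Joint probability weight of a state `ω = (x, t, g)`: the coin `x` and the day `t`
are independent and uniform on `Bool`, and the guess `g` is independent with
`P(g = Heads) = p`. -/
noncomputable def w (p : ℝ) (ω : Bool × Bool × Bool) : ℝ :=
  (1/2) * (1/2) * (if ω.2.2 = Heads then p else 1 - p)

/-- Probability of an event under the above joint distribution. -/
noncomputable def Pr (p : ℝ) (E : Set (Bool × Bool × Bool)) : ℝ :=
  ∑ ω : Bool × Bool × Bool, E.indicator (w p) ω

/-- Eloise wins if Beauty is not awake (`x = Heads ∧ t = Tuesday`) or her guess is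
correct (`g = x`). -/
def ElWins : Set (Bool × Bool × Bool) :=
  {ω | (ω.1 = Heads ∧ ω.2.1 = Tuesday) ∨ ω.2.2 = ω.1}

lemma Pr_val (p : ℝ) : Pr p ElWins = (3 - p) / 4 := by
  simp only [Pr, Fintype.sum_prod_type, Fintype.sum_bool, Set.indicator, ElWins,
    Set.mem_setOf_eq, w, Heads, Tuesday]
  norm_num
  ring

theorem sleepingBeauty_value :
    (∀ p ∈ Set.Icc (0:ℝ) 1, Pr p ElWins = (3 - p) / 4) ∧
    (∀ p ∈ Set.Icc (0:ℝ) 1, Pr p ElWins ≤ Pr 0 ElWins) ∧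
    Pr 0 ElWins = 3/4 := by
  refine ⟨fun p _ => Pr_val p, fun p hp => ?_, by rw [Pr_val]; norm_num⟩
  rw [Pr_val, Pr_val]
  have := hp.1
  linarith
end

section
/- Let x and t be independent and uniformly distributed on Bool, let Awake be the complement of the event {x = Heads ∧ t = Tuesday}, and let g be independent with P(g = Heads) = p for p ∈ [0,1]. Then the conditional probability P(g = x | Awake) = (2 − p)/3. In particular, conditional on being awake, Eloise wins 1/3 of the plays in which she guesses Heads and 2/3 of the plays in which she guesses Tails. -/
/-- Conditional probability `P(A | B) = P(A ∩ B) / P(B)`. -/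
noncomputable def condPr (p : ℝ) (A B : Set (Bool × Bool × Bool)) : ℝ :=
  Pr p (A ∩ B) / Pr p B

/-- The awake event: the complement of `{x = Heads ∧ t = Tuesday}`. -/
def Awake : Set (Bool × Bool × Bool) := {ω | ω.1 = Heads ∧ ω.2.1 = Tuesday}ᶜ

/-- The event that Eloise's guess is correct. -/
def Correct : Set (Bool × Bool × Bool) := {ω | ω.2.2 = ω.1}

theorem sleepingBeauty_conditional_win (p : ℝ) (hp : p ∈ Set.Icc (0:ℝ) 1) :
    condPr p Correct Awake = (2 - p) / 3 ∧
    -- conditional on being awake, guessing Heads wins 1/3 of the time ...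
    (0 < p → condPr p Correct (Awake ∩ {ω | ω.2.2 = Heads}) = 1/3) ∧
    -- ... and guessing Tails wins 2/3 of the time
    (p < 1 → condPr p Correct (Awake ∩ {ω | ω.2.2 = Tails}) = 2/3) := by
  obtain ⟨hp0, hp1⟩ := hp
  simp only [condPr, Pr, Set.indicator, Fintype.sum_prod_type, Fintype.sum_bool,
    Set.mem_inter_iff, Awake, Correct, Set.mem_compl_iff, Set.mem_setOf_eq, w,
    Heads, Tails, Tuesday]
  norm_num
  refine ⟨?_, fun h => ?_, fun h => ?_⟩
  · rw [div_eq_div_iff] <;> ring_nf <;> nlinarith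
  · rw [div_eq_div_iff] <;> nlinarith
  · rw [div_eq_div_iff] <;> nlinarith
end

section
/- (Elga's argument) Let μ be a probability measure on the three-element type {H1, T1, T2} such that μ({T1, T2}) > 0, the conditional probabilities satisfy μ({T1} | {T1, T2}) = μ({T2} | {T1, T2}), and μ({H1} | {H1, T1}) = 1/2. Then μ({H1}) = μ({T1}) = μ({T2}) = 1/3. -/
open MeasureTheory ProbabilityTheory

/-- The three situations Beauty may be in upon waking: Heads-Monday, Tails-Monday,
and Tails-Tuesday. -/
inductive SBState : Type
  | H1 | T1 | T2
  deriving DecidableEq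

open SBState

instance : MeasurableSpace SBState := ⊤

/-- Elga's argument for 1/3. -/
theorem elga_thirder (μ : Measure SBState) [IsProbabilityMeasure μ]
    (hpos : 0 < μ {T1, T2})
    (h1 : μ[{T1} | {T1, T2}] = μ[{T2} | {T1, T2}])
    (h2 : μ[{H1} | {H1, T1}] = 1/2) :
    μ {H1} = 1/3 ∧ μ {T1} = 1/3 ∧ μ {T2} = 1/3 := by
  have mAll : ∀ s : Set SBState, MeasurableSet s := fun s => trivial
  have hfin : ∀ s : Set SBState, μ s ≠ ⊤ := fun s => measure_ne_top μ s
  have hsum : μ {H1} + μ {T1} + μ {T2} = 1 := by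
    have h : μ Set.univ = 1 := measure_univ
    have huniv : (Set.univ : Set SBState) = {H1} ∪ {T1} ∪ {T2} := by
      ext x; cases x <;> simp
    rw [huniv, measure_union (by rw [Set.disjoint_left]; rintro x (hx|hx) hy <;> simp_all) (mAll _),
      measure_union (by rw [Set.disjoint_left]; rintro x hx hy; simp_all) (mAll _)] at h
    exact h
  have e1 : μ ({T1, T2} ∩ {T1}) = μ {T1} := by
    congr 1; ext x; cases x <;> simp
  have e2 : μ ({T1, T2} ∩ {T2}) = μ {T2} := by
    congr 1; ext x; cases x <;> simp
  have e3 : μ ({H1, T1} ∩ {H1}) = μ {H1} := by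
    congr 1; ext x; cases x <;> simp
  rw [cond_apply (mAll _), cond_apply (mAll _), e1, e2] at h1
  rw [cond_apply (mAll _), e3] at h2
  have hbc : μ {T1} = μ {T2} := by
    have key : μ {T1, T2} * ((μ {T1, T2})⁻¹ * μ {T1})
        = μ {T1, T2} * ((μ {T1, T2})⁻¹ * μ {T2}) := by rw [h1]
    rwa [← mul_assoc, ← mul_assoc, ENNReal.mul_inv_cancel hpos.ne' (hfin _), one_mul,
      one_mul] at key
  have hHT : μ {H1, T1} = μ {H1} + μ {T1} := by
    rw [show ({H1, T1} : Set SBState) = {H1} ∪ {T1} by rfl,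
      measure_union (by rw [Set.disjoint_left]; rintro x hx hy; simp_all) (mAll _)]
  have hne : μ {H1, T1} ≠ 0 := by
    intro h0
    have ha0 : μ {H1} = 0 := by
      have := measure_mono (μ := μ) (show ({H1} : Set SBState) ⊆ {H1, T1} by simp)
      simpa [h0] using this
    rw [h0, ha0] at h2
    simp at h2
    exact (by norm_num : (2:ENNReal)⁻¹ ≠ 0) h2.symm
  have hab : μ {H1} = μ {T1} := by
    have key : μ {H1, T1} * ((μ {H1, T1})⁻¹ * μ {H1}) = μ {H1, T1} * (1/2) := by
      rw [h2]
    rw [← mul_assoc, ENNReal.mul_inv_cancel hne (hfin _), one_mul, hHT] at key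
    have key2 : μ {H1} + μ {H1} = μ {H1} + μ {T1} := by
      calc μ {H1} + μ {H1}
          = (μ {H1} + μ {T1}) * (1/2) + (μ {H1} + μ {T1}) * (1/2) := by rw [← key]
        _ = (μ {H1} + μ {T1}) * (1/2 + 1/2) := by ring
        _ = (μ {H1} + μ {T1}) * 1 := by
              congr 1
              rw [← two_mul, one_div, ENNReal.mul_inv_cancel (by norm_num) (by norm_num)]
        _ = μ {H1} + μ {T1} := mul_one _
    exact (ENNReal.add_right_inj (hfin _)).mp key2
  refine ⟨?_, ?_, ?_⟩ <;>
  · rw [ENNReal.eq_div_iff (by norm_num) (by norm_num)]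
    rw [← hsum, ← hab, ← hbc, ← hab]
    ring
end
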